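/- Assume that every diagonal entry of B is nonzero and every row of B̃ is nonzero. Let L be the lower-triangular part of B (L_{ij} = B_{ij} if j ≤ i and L_{ij} = 0 otherwise) and R = B − L. Let sequences x₁^(k) ∈ ℝ^m and x₂^(k) ∈ ℝ^p satisfy, for all k ≥ 0: x₂^(k+1) = x₂^(k) + s(B̃)·d^(k) with d^(k)_i = (b_i − B_i·x₁^(k) − B̃_i·x₂^(k))/(m·‖B̃_i‖₁), and x₁^(k+1) = L⁻¹·(−R·x₁^(k) + b − B̃·x₂^(k+1)). Set q = ‖I − B·L⁻¹‖₁ · ‖I − (1/m)·B̃·s(B̃)·N(B̃)⁻¹‖₁, where ‖·‖₁ is the ℓ1 operator norm. If q < 1, then for every k, ‖B·x₁^(k) + B̃·x₂^(k) − b‖₁ ≤ q^k · ‖B·x₁^(0) + B̃·x₂^(0) − b‖₁; in particular the residuals B·x₁^(k) + B̃·x₂^(k) − b converge to the zero vector as k → ∞. -/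

import Mathlib

/-!
Write `r = B x₁ + B̃ x₂ − b` for the residual. The `x₂`-update adds `B̃ s(B̃) d` to it with
`d = −(1/m) N(B̃)⁻¹ r`, so it multiplies `r` by `I − (1/m) B̃ s(B̃) N(B̃)⁻¹`. Since `L` is invertible,
the `x₁`-update reads `x₁ ↦ x₁ − L⁻¹ r`, which multiplies the residual by `I − B L⁻¹`. As
`‖M v‖₁ ≤ ‖M‖₁ ‖v‖₁`, one sweep multiplies `‖r‖₁` by at most `q`.
-/

/-- The ℓ1-norm of a vector: sum of absolute values of its entries. -/
noncomputable def vecL1 {n : ℕ} (v : Fin n → ℝ) : ℝ := ∑ i, |v i|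

/-- The ℓ1 operator norm of a matrix: the maximum absolute column sum. -/
noncomputable def matL1 {a c : ℕ} (M : Matrix (Fin a) (Fin c) ℝ) : ℝ :=
  ⨆ j, ∑ i, |M i j|

open Matrix Filter Topology

lemma abs_le_vecL1 {n : ℕ} (v : Fin n → ℝ) (i : Fin n) : |v i| ≤ vecL1 v :=
  Finset.single_le_sum (f := fun j => |v j|) (fun _ _ => abs_nonneg _) (Finset.mem_univ i)

lemma matL1_nonneg {a c : ℕ} (M : Matrix (Fin a) (Fin c) ℝ) : 0 ≤ matL1 M :=
  Real.iSup_nonneg fun _ => Finset.sum_nonneg fun _ _ => abs_nonneg _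

lemma sum_abs_le_matL1 {a c : ℕ} (M : Matrix (Fin a) (Fin c) ℝ) (j : Fin c) :
    ∑ i, |M i j| ≤ matL1 M :=
  le_ciSup (f := fun j => ∑ i, |M i j|) (Set.finite_range _).bddAbove j

lemma vecL1_mulVec_le {a c : ℕ} (M : Matrix (Fin a) (Fin c) ℝ) (v : Fin c → ℝ) :
    vecL1 (M *ᵥ v) ≤ matL1 M * vecL1 v := by
  unfold vecL1
  calc ∑ i, |(M *ᵥ v) i| ≤ ∑ i, ∑ j, |M i j| * |v j| :=
        Finset.sum_le_sum fun i _ => by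
          simp only [mulVec, dotProduct, ← abs_mul]
          exact Finset.abs_sum_le_sum_abs _ _
    _ = ∑ j, (∑ i, |M i j|) * |v j| := by simp only [Finset.sum_mul]; exact Finset.sum_comm
    _ ≤ ∑ j, matL1 M * |v j| :=
        Finset.sum_le_sum fun j _ => mul_le_mul_of_nonneg_right (sum_abs_le_matL1 M j) (abs_nonneg _)
    _ = matL1 M * ∑ j, |v j| := (Finset.mul_sum _ _ _).symm

lemma vecL1_mulVec_mulVec_le {a c e : ℕ} (M₁ : Matrix (Fin a) (Fin c) ℝ)
    (M₂ : Matrix (Fin c) (Fin e) ℝ) (v : Fin e → ℝ) :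
    vecL1 (M₁ *ᵥ M₂ *ᵥ v) ≤ matL1 M₁ * matL1 M₂ * vecL1 v :=
  calc vecL1 (M₁ *ᵥ M₂ *ᵥ v) ≤ matL1 M₁ * vecL1 (M₂ *ᵥ v) := vecL1_mulVec_le _ _
    _ ≤ matL1 M₁ * (matL1 M₂ * vecL1 v) :=
        mul_le_mul_of_nonneg_left (vecL1_mulVec_le _ _) (matL1_nonneg _)
    _ = matL1 M₁ * matL1 M₂ * vecL1 v := (mul_assoc _ _ _).symm

lemma tendsto_zero_of_vecL1_le_geometric {n : ℕ} {r : ℕ → Fin n → ℝ} {q C : ℝ}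
    (hq0 : 0 ≤ q) (hq1 : q < 1) (h : ∀ k, vecL1 (r k) ≤ q ^ k * C) :
    Tendsto r atTop (𝓝 0) := by
  have hgeom : Tendsto (fun k => q ^ k * C) atTop (𝓝 0) := by
    simpa using (tendsto_pow_atTop_nhds_zero_of_lt_one hq0 hq1).mul_const C
  refine tendsto_pi_nhds.mpr fun i => squeeze_zero_norm (fun k => ?_) hgeom
  exact (Real.norm_eq_abs _).trans_le ((abs_le_vecL1 _ i).trans (h k))

lemma sum_abs_ne_zero {ι : Type*} [Fintype ι] {v : ι → ℝ} (hv : v ≠ 0) : ∑ j, |v j| ≠ 0 := by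
  intro h
  refine hv (funext fun j => abs_eq_zero.mp ?_)
  exact (Finset.sum_eq_zero_iff_of_nonneg fun _ _ => abs_nonneg _).mp h j (Finset.mem_univ j)

lemma inv_diagonal_of_ne_zero {K n : Type*} [Field K] [Fintype n] [DecidableEq n] {v : n → K}
    (hv : ∀ i, v i ≠ 0) : (diagonal v)⁻¹ = diagonal v⁻¹ := by
  refine inv_eq_right_inv ?_
  rw [diagonal_mul_diagonal, ← diagonal_one]
  exact congrArg diagonal (funext fun i => mul_inv_cancel₀ (hv i))

lemma IsLowerTriangular.isUnit_det {K n : Type*} [Field K] [Fintype n] [LinearOrder n]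
    {L : Matrix n n K} (hL : L.IsLowerTriangular) (hdiag : ∀ i, L i i ≠ 0) : IsUnit L.det := by
  rw [det_of_isLowerTriangular L hL]
  exact isUnit_iff_ne_zero.mpr (Finset.prod_ne_zero_iff.mpr fun i _ => hdiag i)

section BlockResidual

variable {K : Type*} [CommRing K] {n l : Type*} [Fintype n] [DecidableEq n] [Fintype l]

variable (B : Matrix n n K) (Bt : Matrix n l K) (b : n → K)

def blockResidual (x : n → K) (y : l → K) : n → K := B *ᵥ x + Bt *ᵥ y - b

lemma blockResidual_add_right_mulVec (S : Matrix l n K) (D : Matrix n n K) (c : K)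
    (x : n → K) (y : l → K) :
    blockResidual B Bt b x (y + S *ᵥ ((-c) • D *ᵥ blockResidual B Bt b x y)) =
      (1 - c • (Bt * S * D)) *ᵥ blockResidual B Bt b x y := by
  set r := blockResidual B Bt b x y
  have hr : r = B *ᵥ x + Bt *ᵥ y - b := rfl
  rw [blockResidual, sub_mulVec, one_mulVec, smul_mulVec, ← mulVec_mulVec, ← mulVec_mulVec,
    mulVec_add, mulVec_smul, mulVec_smul, neg_smul, hr]
  abel

lemma blockResidual_gaussSeidel_step {L : Matrix n n K} (hL : IsUnit L.det)
    (x : n → K) (y : l → K) :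
    blockResidual B Bt b (L⁻¹ *ᵥ (-((B - L) *ᵥ x) + (b - Bt *ᵥ y))) y =
      (1 - B * L⁻¹) *ᵥ blockResidual B Bt b x y := by
  set r := blockResidual B Bt b x y
  have hrhs : -((B - L) *ᵥ x) + (b - Bt *ᵥ y) = L *ᵥ x - r := by
    simp only [r, blockResidual, sub_mulVec]
    abel
  rw [hrhs, mulVec_sub, mulVec_mulVec, nonsing_inv_mul L hL, one_mulVec, sub_mulVec, one_mulVec,
    ← mulVec_mulVec]
  simp only [r, blockResidual, mulVec_sub]
  abel

end BlockResidual

theorem generalized_gauss_seidel_residual_convergence_general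
    (m p : ℕ)
    (B : Matrix (Fin m) (Fin m) ℝ) (Bt : Matrix (Fin m) (Fin p) ℝ) (b : Fin m → ℝ)
    (hDiag : ∀ i, B i i ≠ 0) (hRows : ∀ i, Bt i ≠ 0)
    (s : Matrix (Fin p) (Fin m) ℝ)
    (N : Matrix (Fin m) (Fin m) ℝ)
    (hN : N = Matrix.diagonal (fun i => ∑ j, |Bt i j|))
    (L : Matrix (Fin m) (Fin m) ℝ) (hL : ∀ i j, L i j = if (j : ℕ) ≤ (i : ℕ) then B i j else 0)
    (R : Matrix (Fin m) (Fin m) ℝ) (hR : R = B - L)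
    (x₁ : ℕ → Fin m → ℝ) (x₂ : ℕ → Fin p → ℝ)
    (d : ℕ → Fin m → ℝ)
    (hd : ∀ k i, d k i = (b i - (B.mulVec (x₁ k)) i - (Bt.mulVec (x₂ k)) i) /
      ((m : ℝ) * ∑ j, |Bt i j|))
    (hx₂ : ∀ k, x₂ (k + 1) = x₂ k + s.mulVec (d k))
    (hx₁ : ∀ k, x₁ (k + 1) = L⁻¹.mulVec (-(R.mulVec (x₁ k)) + (b - Bt.mulVec (x₂ (k + 1)))))
    (q : ℝ)
    (hq : q = matL1 (1 - B * L⁻¹) * matL1 (1 - (1 / (m : ℝ)) • (Bt * s * N⁻¹)))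
    (hq1 : q < 1) :
    (∀ k, vecL1 (B.mulVec (x₁ k) + Bt.mulVec (x₂ k) - b) ≤
        q ^ k * vecL1 (B.mulVec (x₁ 0) + Bt.mulVec (x₂ 0) - b)) ∧
    Filter.Tendsto (fun k => B.mulVec (x₁ k) + Bt.mulVec (x₂ k) - b)
      Filter.atTop (nhds 0) := by
  set r := fun k => blockResidual B Bt b (x₁ k) (x₂ k)
  have hLunit : IsUnit L.det := by
    refine IsLowerTriangular.isUnit_det (fun i j hij => ?_) fun i => by simpa [hL] using hDiag i
    rw [hL, if_neg (Nat.not_le.mpr (show (i : ℕ) < j from hij))]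
  have hNinv : N⁻¹ = diagonal fun i => (∑ j, |Bt i j|)⁻¹ :=
    hN ▸ inv_diagonal_of_ne_zero fun i => sum_abs_ne_zero (hRows i)
  have hd' : ∀ k, d k = (-(1 / (m : ℝ))) • N⁻¹ *ᵥ r k := fun k => funext fun i => by
    simp only [hd, hNinv, r, blockResidual, Pi.smul_apply, mulVec_diagonal, Pi.sub_apply,
      Pi.add_apply, smul_eq_mul]
    ring
  have hcontract : ∀ k, vecL1 (r (k + 1)) ≤ q * vecL1 (r k) := fun k => by
    simp only [r]
    rw [hx₁ k, hR, blockResidual_gaussSeidel_step B Bt b hLunit, hx₂ k, hd' k,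
      blockResidual_add_right_mulVec, hq]
    exact vecL1_mulVec_mulVec_le _ _ _
  have hq0 : 0 ≤ q := hq ▸ mul_nonneg (matL1_nonneg _) (matL1_nonneg _)
  have hbound : ∀ k, vecL1 (r k) ≤ q ^ k * vecL1 (r 0) :=
    fun k => le_geom (u := fun k => vecL1 (r k)) hq0 k fun j _ => hcontract j
  exact ⟨hbound, tendsto_zero_of_vecL1_le_geometric hq0 hq1 hbound⟩

/-- if `q = ‖I − B L⁻¹‖₁ ‖I − (1/m) B̃ s N⁻¹‖₁ < 1`, then the residuals
of the generalized Gauss–Seidel iteration satisfy `‖res k‖₁ ≤ q^k ‖res 0‖₁`, and in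
particular they converge to the zero vector. -/
theorem generalized_gauss_seidel_residual_convergence
    (m p : ℕ) (hm : 0 < m) (hp : 0 < p)
    (B : Matrix (Fin m) (Fin m) ℝ) (Bt : Matrix (Fin m) (Fin p) ℝ) (b : Fin m → ℝ)
    (hDiag : ∀ i, B i i ≠ 0) (hRows : ∀ i, Bt i ≠ 0)
    (s : Matrix (Fin p) (Fin m) ℝ) (hs : ∀ j i, s j i = Real.sign (Bt i j))
    (N : Matrix (Fin m) (Fin m) ℝ)
    (hN : N = Matrix.diagonal (fun i => ∑ j, |Bt i j|))
    (L : Matrix (Fin m) (Fin m) ℝ) (hL : ∀ i j, L i j = if (j : ℕ) ≤ (i : ℕ) then B i j else 0)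
    (R : Matrix (Fin m) (Fin m) ℝ) (hR : R = B - L)
    (x₁ : ℕ → Fin m → ℝ) (x₂ : ℕ → Fin p → ℝ)
    (d : ℕ → Fin m → ℝ)
    (hd : ∀ k i, d k i = (b i - (B.mulVec (x₁ k)) i - (Bt.mulVec (x₂ k)) i) /
      ((m : ℝ) * ∑ j, |Bt i j|))
    (hx₂ : ∀ k, x₂ (k + 1) = x₂ k + s.mulVec (d k))
    (hx₁ : ∀ k, x₁ (k + 1) = L⁻¹.mulVec (-(R.mulVec (x₁ k)) + (b - Bt.mulVec (x₂ (k + 1)))))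
    (q : ℝ)
    (hq : q = matL1 (1 - B * L⁻¹) * matL1 (1 - (1 / (m : ℝ)) • (Bt * s * N⁻¹)))
    (hq1 : q < 1) :
    (∀ k, vecL1 (B.mulVec (x₁ k) + Bt.mulVec (x₂ k) - b) ≤
        q ^ k * vecL1 (B.mulVec (x₁ 0) + Bt.mulVec (x₂ 0) - b)) ∧
    Filter.Tendsto (fun k => B.mulVec (x₁ k) + Bt.mulVec (x₂ k) - b)
      Filter.atTop (nhds 0) :=
  generalized_gauss_seidel_residual_convergence_general m p B Bt b hDiag hRows s N hN L hL R hR x₁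
    x₂ d hd hx₂ hx₁ q hq hq1
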